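/- arXiv:2005.00289 — 8 statements merged into one kernel-verified Lean document; each statement's English description precedes it below -/
import Mathlib

section
/- For each a ∈ [0,1), the orbit {(φ(a)+φ(0), φ(a)φ(0)) : φ ∈ Aut(𝔻)} is closed in the symmetrized bidisc 𝔾 (i.e., its intersection with 𝔾 is relatively closed, equivalently: if a sequence in the orbit converges to a point of 𝔾, the limit lies in the orbit). -/
open Complex

lemma sqAbsOneSub (z₁ z₂ : ℂ) :
    ‖1 - (starRingEnd ℂ) z₁ * z₂‖ ^ 2 =
      1 + ‖z₁*z₂‖^2 - ‖z₁+z₂‖^2/2 + ‖z₁-z₂‖^2/2 := by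
  rw [← Complex.normSq_eq_norm_sq, ← Complex.normSq_eq_norm_sq, ← Complex.normSq_eq_norm_sq, ← Complex.normSq_eq_norm_sq]
  simp only [normSq_apply, mul_re, mul_im, add_re, add_im, sub_re, sub_im, one_re, one_im,
    conj_re, conj_im]
  ring


lemma oneSubNe {x : ℂ} (h : ‖x‖ < 1) : (1 : ℂ) - x ≠ 0 := by
  intro h0
  have hx : x = 1 := by linear_combination -h0
  simp [hx] at h

lemma distEq (a : ℝ) (ha0 : 0 ≤ a) (ha1 : a < 1) (θ : ℝ) (α : ℂ) (hα : ‖α‖ < 1) :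
    ‖Complex.exp (θ * I) * ((α - (a:ℂ)) / (1 - (starRingEnd ℂ) α * (a:ℂ))) -
        Complex.exp (θ * I) * α‖ =
      a * ‖1 -
        (starRingEnd ℂ) (Complex.exp (θ * I) * ((α - (a:ℂ)) / (1 - (starRingEnd ℂ) α * (a:ℂ)))) *
        (Complex.exp (θ * I) * α)‖ := by
  set l := Complex.exp (θ * I) with hl
  have hlabs : ‖l‖ = 1 := by
    rw [hl]; exact Complex.norm_exp_ofReal_mul_I θ
  have hden1 : (1 : ℂ) - (starRingEnd ℂ) α * (a:ℂ) ≠ 0 := by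
    apply oneSubNe
    rw [norm_mul, Complex.norm_conj, Complex.norm_real, Real.norm_eq_abs, _root_.abs_of_nonneg ha0]
    calc ‖α‖ * a ≤ 1 * a := by nlinarith [norm_nonneg α]
    _ < 1 := by linarith
  have hden2 : (1 : ℂ) - α * (a:ℂ) ≠ 0 := by
    apply oneSubNe
    rw [norm_mul, Complex.norm_real, Real.norm_eq_abs, _root_.abs_of_nonneg ha0]
    calc ‖α‖ * a ≤ 1 * a := by nlinarith [norm_nonneg α]
    _ < 1 := by linarith
  have hns : Complex.normSq α < 1 := by
    rw [Complex.normSq_eq_norm_sq]; nlinarith [norm_nonneg α]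
  have h1 : l * ((α - (a:ℂ)) / (1 - (starRingEnd ℂ) α * (a:ℂ))) - l * α =
      l * (((a:ℂ) * ((normSq α : ℝ) - 1)) / (1 - (starRingEnd ℂ) α * (a:ℂ))) := by
    rw [← mul_sub]; congr 1
    rw [eq_div_iff hden1, sub_mul, div_mul_cancel₀ _ hden1]
    linear_combination (a:ℂ) * (Complex.mul_conj α)
  have hLHS : ‖l * ((α - (a:ℂ)) / (1 - (starRingEnd ℂ) α * (a:ℂ))) - l * α‖ =
      a * (1 - normSq α) / ‖1 - (starRingEnd ℂ) α * (a:ℂ)‖ := by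
    rw [h1, norm_mul, hlabs, one_mul, norm_div, norm_mul, Complex.norm_real, Real.norm_eq_abs]
    rw [_root_.abs_of_nonneg ha0]
    have h3 : ‖((normSq α : ℝ) - 1 : ℂ)‖ = 1 - normSq α := by
      have h4 : ((normSq α : ℝ) - 1 : ℂ) = ((normSq α - 1 : ℝ) : ℂ) := by push_cast; ring
      rw [h4, Complex.norm_real, Real.norm_eq_abs, _root_.abs_of_nonpos (by linarith)]
      ring
    rw [h3]
  have hconjl : (starRingEnd ℂ) l * l = 1 := by
    rw [mul_comm, Complex.mul_conj]
    norm_cast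
    rw [Complex.normSq_eq_norm_sq, hlabs]; norm_num
  have hexp : (starRingEnd ℂ) (l * ((α - (a:ℂ)) / (1 - (starRingEnd ℂ) α * (a:ℂ)))) =
      (starRingEnd ℂ) l * (((starRingEnd ℂ) α - (a:ℂ)) / (1 - α * (a:ℂ))) := by
    simp [norm_div, Complex.conj_ofReal]
  have h2 : (1 : ℂ) - (starRingEnd ℂ) (l * ((α - (a:ℂ)) / (1 - (starRingEnd ℂ) α * (a:ℂ)))) * (l * α) =
      ((1 : ℂ) - (normSq α : ℝ)) / (1 - α * (a:ℂ)) := by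
    rw [hexp]
    have h5 : (starRingEnd ℂ) l * (((starRingEnd ℂ) α - (a:ℂ)) / (1 - α * (a:ℂ))) * (l * α) =
        ((starRingEnd ℂ) l * l) * (α * ((starRingEnd ℂ) α - (a:ℂ))) / (1 - α * (a:ℂ)) := by
      ring
    rw [h5, hconjl, one_mul]
    field_simp
    linear_combination -(Complex.mul_conj α)
  have habsden : ‖1 - α * (a:ℂ)‖ = ‖1 - (starRingEnd ℂ) α * (a:ℂ)‖ := by
    have h6 : (1 : ℂ) - α * (a:ℂ) = (starRingEnd ℂ) (1 - (starRingEnd ℂ) α * (a:ℂ)) := by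
      simp [map_sub, map_mul, Complex.conj_ofReal]
    rw [h6, Complex.norm_conj]
  rw [hLHS, h2, norm_div, habsden]
  have h7 : ‖(1:ℂ) - (normSq α : ℝ)‖ = 1 - normSq α := by
    have h8 : ((1:ℂ) - (normSq α : ℝ)) = ((1 - normSq α : ℝ) : ℂ) := by push_cast; ring
    rw [h8, Complex.norm_real, Real.norm_eq_abs, _root_.abs_of_nonneg (by linarith)]
  rw [h7]; ring


lemma oneSubNe' {x : ℂ} (h : ‖x‖ < 1) : (1 : ℂ) - x ≠ 0 := by
  intro h0
  have hx : x = 1 := by linear_combination -h0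
  simp [hx] at h

lemma construct (a : ℝ) (ha0 : 0 ≤ a) (ha1 : a < 1) (z₁ z₂ : ℂ)
    (h1 : ‖z₁‖ < 1) (h2 : ‖z₂‖ < 1)
    (hd : ‖z₁ - z₂‖ = a * ‖1 - (starRingEnd ℂ) z₁ * z₂‖) :
    ∃ (θ : ℝ) (α : ℂ), ‖α‖ < 1 ∧
      z₁ = Complex.exp (θ * I) * ((α - (a:ℂ)) / (1 - (starRingEnd ℂ) α * (a:ℂ))) ∧
      z₂ = Complex.exp (θ * I) * α := by
  rcases eq_or_lt_of_le ha0 with hz | hpos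
  · -- a = 0
    have ha : a = 0 := hz.symm
    subst ha
    have : z₁ = z₂ := by
      have := hd
      rw [zero_mul] at this
      have := norm_eq_zero.mp this
      linear_combination this
    refine ⟨0, z₁, h1, ?_, ?_⟩
    · push_cast
      simp
    · push_cast
      simp [this]
  · -- a > 0
    have hne : (1 : ℂ) - z₁ * (starRingEnd ℂ) z₂ ≠ 0 := by
      apply oneSubNe'
      rw [norm_mul, Complex.norm_conj]
      nlinarith [norm_nonneg z₁, norm_nonneg z₂]
    have habs12 : ‖1 - z₁ * (starRingEnd ℂ) z₂‖ =
        ‖1 - (starRingEnd ℂ) z₁ * z₂‖ := by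
      have h6 : (1 : ℂ) - z₁ * (starRingEnd ℂ) z₂ = (starRingEnd ℂ) (1 - (starRingEnd ℂ) z₁ * z₂) := by
        simp [map_sub, map_mul, mul_comm]
      rw [h6, Complex.norm_conj]
    obtain ⟨l, hldef⟩ : ∃ l : ℂ, l = (z₂ - z₁) / ((a:ℂ) * (1 - z₁ * (starRingEnd ℂ) z₂)) := ⟨_, rfl⟩
    have hdenne : ((a:ℂ) * (1 - z₁ * (starRingEnd ℂ) z₂)) ≠ 0 := by
      apply mul_ne_zero _ hne
      exact_mod_cast (ne_of_gt hpos)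
    have hlabs : ‖l‖ = 1 := by
      rw [hldef, norm_div, norm_mul, Complex.norm_real, Real.norm_eq_abs, _root_.abs_of_nonneg ha0, habs12]
      have hpos2 : 0 < ‖1 - (starRingEnd ℂ) z₁ * z₂‖ := by
        rw [← habs12]
        exact norm_pos_iff.mpr hne
      have habs21 : ‖z₂ - z₁‖ = ‖z₁ - z₂‖ := by
        exact norm_sub_rev z₂ z₁
      rw [habs21, hd]
      field_simp
    have hleq : l * ((a:ℂ) * (1 - z₁ * (starRingEnd ℂ) z₂)) = z₂ - z₁ := by
      rw [hldef]; exact div_mul_cancel₀ _ hdenne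
    have hll : l * (starRingEnd ℂ) l = 1 := by
      rw [Complex.mul_conj]
      norm_cast
      rw [Complex.normSq_eq_norm_sq, hlabs]; norm_num
    refine ⟨Complex.arg l, (starRingEnd ℂ) l * z₂, ?_, ?_, ?_⟩
    · rw [norm_mul, Complex.norm_conj, hlabs, one_mul]; exact h2
    · have hexp : Complex.exp ((Complex.arg l : ℝ) * I) = l := by
        have h9 := Complex.norm_mul_exp_arg_mul_I l
        rwa [hlabs, Complex.ofReal_one, one_mul] at h9
      rw [hexp]
      have hcc : (starRingEnd ℂ) ((starRingEnd ℂ) l * z₂) = l * (starRingEnd ℂ) z₂ := by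
        simp [map_mul]
      rw [hcc]
      have hdne : (1 : ℂ) - l * (starRingEnd ℂ) z₂ * (a:ℂ) ≠ 0 := by
        apply oneSubNe'
        rw [norm_mul, norm_mul, hlabs, Complex.norm_conj, Complex.norm_real, Real.norm_eq_abs,
          _root_.abs_of_nonneg ha0, one_mul]
        nlinarith [norm_nonneg z₂]
      rw [eq_comm, mul_div_assoc', div_eq_iff hdne]
      linear_combination z₂ * hll - hleq
    · have hexp : Complex.exp ((Complex.arg l : ℝ) * I) = l := by
        have h9 := Complex.norm_mul_exp_arg_mul_I l
        rwa [hlabs, Complex.ofReal_one, one_mul] at h9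
      rw [hexp]
      linear_combination -z₂ * hll


/-- For each `a ∈ [0,1)`, the orbit `{(φ(a)+φ(0), φ(a)φ(0)) : φ ∈ Aut(𝔻)}` is relatively
closed in the symmetrized bidisc `𝔾`: any point of `𝔾` in the closure of the orbit
already lies in the orbit. -/
theorem stmt3 (a : ℝ) (ha0 : 0 ≤ a) (ha1 : a < 1) :
    ∀ w : ℂ × ℂ,
      w ∈ closure {w : ℂ × ℂ | ∃ (θ : ℝ) (α : ℂ), ‖α‖ < 1 ∧
        w = (Complex.exp (θ * I) * ((α - (a : ℂ)) / (1 - (starRingEnd ℂ) α * (a : ℂ))) +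
               Complex.exp (θ * I) * ((α - 0) / (1 - (starRingEnd ℂ) α * 0)),
             Complex.exp (θ * I) * ((α - (a : ℂ)) / (1 - (starRingEnd ℂ) α * (a : ℂ))) *
               (Complex.exp (θ * I) * ((α - 0) / (1 - (starRingEnd ℂ) α * 0))))} →
      (∃ z₁ z₂ : ℂ, ‖z₁‖ < 1 ∧ ‖z₂‖ < 1 ∧ w = (z₁ + z₂, z₁ * z₂)) →
      w ∈ {w : ℂ × ℂ | ∃ (θ : ℝ) (α : ℂ), ‖α‖ < 1 ∧
        w = (Complex.exp (θ * I) * ((α - (a : ℂ)) / (1 - (starRingEnd ℂ) α * (a : ℂ))) +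
               Complex.exp (θ * I) * ((α - 0) / (1 - (starRingEnd ℂ) α * 0)),
             Complex.exp (θ * I) * ((α - (a : ℂ)) / (1 - (starRingEnd ℂ) α * (a : ℂ))) *
               (Complex.exp (θ * I) * ((α - 0) / (1 - (starRingEnd ℂ) α * 0))))} := by
  intro w hcl hG
  obtain ⟨z₁, z₂, h1, h2, hw⟩ := hG
  -- the continuous defining function of the closed condition, in symmetric coordinates
  set G : ℂ × ℂ → ℝ := fun p =>
    ‖p.1 ^ 2 - 4 * p.2‖ -
      a ^ 2 * (1 + ‖p.2‖ ^ 2 - ‖p.1‖ ^ 2 / 2 +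
        ‖p.1 ^ 2 - 4 * p.2‖ / 2) with hGdef
  have hGcont : Continuous G := by
    rw [hGdef]
    apply Continuous.sub
    · exact continuous_norm.comp (by fun_prop)
    · apply Continuous.mul continuous_const
      apply Continuous.add
      · apply Continuous.sub
        · apply Continuous.add continuous_const
          exact ((continuous_norm.comp continuous_snd).pow 2)
        · exact ((continuous_norm.comp continuous_fst).pow 2).div_const 2
      · exact (continuous_norm.comp (by fun_prop)).div_const 2
  have hGkey : ∀ u v : ℂ, G (u + v, u * v) =
      ‖u - v‖ ^ 2 - a ^ 2 * ‖1 - (starRingEnd ℂ) u * v‖ ^ 2 := by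
    intro u v
    have e1 : (u + v) ^ 2 - 4 * (u * v) = (u - v) ^ 2 := by ring
    rw [hGdef]
    simp only
    rw [e1, norm_pow, sqAbsOneSub]
  have horb : {w : ℂ × ℂ | ∃ (θ : ℝ) (α : ℂ), ‖α‖ < 1 ∧
        w = (Complex.exp (θ * I) * ((α - (a : ℂ)) / (1 - (starRingEnd ℂ) α * (a : ℂ))) +
               Complex.exp (θ * I) * ((α - 0) / (1 - (starRingEnd ℂ) α * 0)),
             Complex.exp (θ * I) * ((α - (a : ℂ)) / (1 - (starRingEnd ℂ) α * (a : ℂ))) *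
               (Complex.exp (θ * I) * ((α - 0) / (1 - (starRingEnd ℂ) α * 0))))} ⊆ G ⁻¹' {0} := by
    rintro p ⟨θ, α, hα, rfl⟩
    have hsimp : (α - 0) / (1 - (starRingEnd ℂ) α * 0) = α := by simp
    rw [hsimp]
    simp only [Set.mem_preimage, Set.mem_singleton_iff]
    rw [hGkey]
    rw [distEq a ha0 ha1 θ α hα]
    ring
  have hGw : G w = 0 :=
    closure_minimal horb (isClosed_singleton.preimage hGcont) hcl
  rw [hw, hGkey] at hGw
  have hd : ‖z₁ - z₂‖ = a * ‖1 - (starRingEnd ℂ) z₁ * z₂‖ := by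
    have hx : (0:ℝ) ≤ ‖z₁ - z₂‖ := norm_nonneg _
    have hy : (0:ℝ) ≤ a * ‖1 - (starRingEnd ℂ) z₁ * z₂‖ :=
      mul_nonneg ha0 (norm_nonneg _)
    nlinarith [sq_nonneg (‖z₁ - z₂‖ - a * ‖1 - (starRingEnd ℂ) z₁ * z₂‖),
      sq_nonneg (‖z₁ - z₂‖ + a * ‖1 - (starRingEnd ℂ) z₁ * z₂‖)]
  obtain ⟨θ, α, hα, hz₁, hz₂⟩ := construct a ha0 ha1 z₁ z₂ h1 h2 hd
  refine ⟨θ, α, hα, ?_⟩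
  have hsimp : (α - 0) / (1 - (starRingEnd ℂ) α * 0) = α := by simp
  rw [hw, hsimp, ← hz₁, ← hz₂]
end

section
/- If (c₁,d₁,c₂,d₂) ∈ ℝ⁴ corresponds to a point of 𝔻 × 𝔻 at which all four partial derivatives of the Möbius distance f vanish, then |c₁|² + |d₁|² + |c₂|² + |d₂|² = 2; in particular, no such point exists in 𝔻 × 𝔻 minus the diagonal. -/
/-- The Möbius distance in the four real coordinates. -/
noncomputable def mobiusF (x₁ y₁ x₂ y₂ : ℝ) : ℝ :=
  Real.sqrt ((x₁ - x₂) ^ 2 + (y₁ - y₂) ^ 2) /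
    Real.sqrt ((1 - x₁ * x₂ - y₁ * y₂) ^ 2 + (x₁ * y₂ - x₂ * y₁) ^ 2)

/-- Key abstract lemma: if `deriv (√N/√D) = 0` at a point where `N, D > 0` and
`N` is everywhere nonnegative, then `N' * D = N * D'`. -/
lemma sqrt_div_deriv_eq_zero (N D : ℝ → ℝ) (N' D' t : ℝ)
    (hN : HasDerivAt N N' t) (hD : HasDerivAt D D' t)
    (hNpos : 0 < N t) (hDpos : 0 < D t) (hNnn : ∀ s, 0 ≤ N s)
    (h : deriv (fun s => Real.sqrt (N s) / Real.sqrt (D s)) t = 0) :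
    N' * D t = N t * D' := by
  have hfun : (fun s => Real.sqrt (N s) / Real.sqrt (D s)) =
      fun s => Real.sqrt (N s / D s) := by
    funext s
    rw [Real.sqrt_div (hNnn s)]
  have hq : HasDerivAt (fun s => N s / D s) ((N' * D t - N t * D') / D t ^ 2) t :=
    hN.div hD hDpos.ne'
  have hqpos : 0 < N t / D t := div_pos hNpos hDpos
  have hcomp : HasDerivAt (fun s => Real.sqrt (N s / D s))
      (1 / (2 * Real.sqrt (N t / D t)) * ((N' * D t - N t * D') / D t ^ 2)) t :=
    (Real.hasDerivAt_sqrt hqpos.ne').comp t hq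
  rw [hfun, hcomp.deriv] at h
  have hs : (0:ℝ) < Real.sqrt (N t / D t) := Real.sqrt_pos.mpr hqpos
  have h1 : (1 : ℝ) / (2 * Real.sqrt (N t / D t)) ≠ 0 := by positivity
  have h2 : (N' * D t - N t * D') / D t ^ 2 = 0 := by
    rcases mul_eq_zero.mp h with h' | h'
    · exact absurd h' h1
    · exact h'
  have h3 : N' * D t - N t * D' = 0 := by
    field_simp at h2
    linarith [h2]
  linarith

/-- If all four partial derivatives of the Möbius distance vanish at a point of
`𝔻 × 𝔻` off the diagonal, then the point satisfies `|c₁|²+|d₁|²+|c₂|²+|d₂|² = 2`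
(which is impossible for a point of `𝔻 × 𝔻`). -/
theorem stmt6 (c₁ d₁ c₂ d₂ : ℝ)
    (h1 : c₁ ^ 2 + d₁ ^ 2 < 1) (h2 : c₂ ^ 2 + d₂ ^ 2 < 1)
    (hne : (c₁, d₁) ≠ (c₂, d₂))
    (p1 : deriv (fun t => mobiusF t d₁ c₂ d₂) c₁ = 0)
    (p2 : deriv (fun t => mobiusF c₁ t c₂ d₂) d₁ = 0)
    (p3 : deriv (fun t => mobiusF c₁ d₁ t d₂) c₂ = 0)
    (p4 : deriv (fun t => mobiusF c₁ d₁ c₂ t) d₂ = 0) :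
    c₁ ^ 2 + d₁ ^ 2 + c₂ ^ 2 + d₂ ^ 2 = 2 := by
  set u := c₁ - c₂ with hu
  set v := d₁ - d₂ with hv
  have huv : u ≠ 0 ∨ v ≠ 0 := by
    by_contra hcon
    push_neg at hcon
    exact hne (by ext <;> simp <;> [linarith [hcon.1]; linarith [hcon.2]])
  set A := 1 - c₁ * c₂ - d₁ * d₂ with hA
  set B := c₁ * d₂ - c₂ * d₁ with hB
  set Nv := u ^ 2 + v ^ 2 with hNv
  set Dv := A ^ 2 + B ^ 2 with hDv
  have hNpos : 0 < Nv := by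
    rcases huv with h | h
    · have := sq_pos_of_ne_zero h
      nlinarith [sq_nonneg v]
    · have := sq_pos_of_ne_zero h
      nlinarith [sq_nonneg u]
  have hDpos : 0 < Dv := by
    have key : Dv = Nv + (1 - (c₁^2 + d₁^2)) * (1 - (c₂^2 + d₂^2)) := by
      rw [hDv, hNv, hA, hB, hu, hv]; ring
    nlinarith
  -- Four polynomial equations from the vanishing derivatives.
  have e1 : (2 * u) * Dv = Nv * (2 * A * (-c₂) + 2 * B * d₂) := by
    apply sqrt_div_deriv_eq_zero (fun t => (t - c₂)^2 + (d₁ - d₂)^2)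
      (fun t => (1 - t * c₂ - d₁ * d₂)^2 + (t * d₂ - c₂ * d₁)^2) _ _ c₁
    · exact (((hasDerivAt_id c₁).sub_const c₂).pow 2).add_const _ |>.congr_deriv (by simp only [id_eq]; ring)
    · have ha : HasDerivAt (fun t : ℝ => 1 - t * c₂ - d₁ * d₂) (-c₂) c₁ := by
        simpa using (((hasDerivAt_id c₁).mul_const c₂).const_sub 1).sub_const (d₁ * d₂)
      have hb : HasDerivAt (fun t : ℝ => t * d₂ - c₂ * d₁) d₂ c₁ := by
        simpa using ((hasDerivAt_id c₁).mul_const d₂).sub_const (c₂ * d₁)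
      exact ((ha.pow 2).add (hb.pow 2)).congr_deriv (by rw [hA, hB]; ring)
    · exact hNpos
    · exact hDpos
    · intro s; positivity
    · exact p1
  have e2 : (2 * v) * Dv = Nv * (2 * A * (-d₂) + 2 * B * (-c₂)) := by
    apply sqrt_div_deriv_eq_zero (fun t => (c₁ - c₂)^2 + (t - d₂)^2)
      (fun t => (1 - c₁ * c₂ - t * d₂)^2 + (c₁ * d₂ - c₂ * t)^2) _ _ d₁
    · exact ((((hasDerivAt_id d₁).sub_const d₂).pow 2).const_add _).congr_deriv
        (by simp only [id_eq]; ring)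
    · have ha : HasDerivAt (fun t : ℝ => 1 - c₁ * c₂ - t * d₂) (-d₂) d₁ := by
        simpa using (((hasDerivAt_id d₁).mul_const d₂).const_sub (1 - c₁ * c₂))
      have hb : HasDerivAt (fun t : ℝ => c₁ * d₂ - c₂ * t) (-c₂) d₁ := by
        simpa using ((hasDerivAt_id d₁).const_mul c₂).const_sub (c₁ * d₂)
      exact ((ha.pow 2).add (hb.pow 2)).congr_deriv (by rw [hA, hB]; ring)
    · exact hNpos
    · exact hDpos
    · intro s; positivity
    · exact p2
  have e3 : (-2 * u) * Dv = Nv * (2 * A * (-c₁) + 2 * B * (-d₁)) := by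
    apply sqrt_div_deriv_eq_zero (fun t => (c₁ - t)^2 + (d₁ - d₂)^2)
      (fun t => (1 - c₁ * t - d₁ * d₂)^2 + (c₁ * d₂ - t * d₁)^2) _ _ c₂
    · exact ((((hasDerivAt_id c₂).const_sub c₁).pow 2).add_const _).congr_deriv
        (by simp only [id_eq]; ring)
    · have ha : HasDerivAt (fun t : ℝ => 1 - c₁ * t - d₁ * d₂) (-c₁) c₂ := by
        simpa using (((hasDerivAt_id c₂).const_mul c₁).const_sub 1).sub_const (d₁ * d₂)
      have hb : HasDerivAt (fun t : ℝ => c₁ * d₂ - t * d₁) (-d₁) c₂ := by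
        simpa using ((hasDerivAt_id c₂).mul_const d₁).const_sub (c₁ * d₂)
      exact ((ha.pow 2).add (hb.pow 2)).congr_deriv (by rw [hA, hB]; ring)
    · exact hNpos
    · exact hDpos
    · intro s; positivity
    · exact p3
  have e4 : (-2 * v) * Dv = Nv * (2 * A * (-d₁) + 2 * B * c₁) := by
    apply sqrt_div_deriv_eq_zero (fun t => (c₁ - c₂)^2 + (d₁ - t)^2)
      (fun t => (1 - c₁ * c₂ - d₁ * t)^2 + (c₁ * t - c₂ * d₁)^2) _ _ d₂
    · exact ((((hasDerivAt_id d₂).const_sub d₁).pow 2).const_add _).congr_deriv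
        (by simp only [id_eq]; ring)
    · have ha : HasDerivAt (fun t : ℝ => 1 - c₁ * c₂ - d₁ * t) (-d₁) d₂ := by
        simpa using (((hasDerivAt_id d₂).const_mul d₁).const_sub (1 - c₁ * c₂))
      have hb : HasDerivAt (fun t : ℝ => c₁ * t - c₂ * d₁) c₁ d₂ := by
        simpa using ((hasDerivAt_id d₂).const_mul c₁).sub_const (c₂ * d₁)
      exact ((ha.pow 2).add (hb.pow 2)).congr_deriv (by rw [hA, hB]; ring)
    · exact hNpos
    · exact hDpos
    · intro s; positivity
    · exact p4
  -- back to raw coordinates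
  clear_value u v A B Nv Dv
  subst hNv hDv hA hB hu hv
  have q2a : (c₁ - c₂) * (1 - (c₂^2 + d₂^2)) = 0 := by
    have h0 : (c₁ - c₂) * (1 - (c₂^2 + d₂^2)) *
        ((1 - c₁ * c₂ - d₁ * d₂)^2 + (c₁ * d₂ - c₂ * d₁)^2) = 0 := by
      linear_combination ((1 - c₁*c₂ - d₁*d₂)/2) * e1 + ((c₁*d₂ - c₂*d₁)/2) * e2
    exact (mul_eq_zero.mp h0).resolve_right hDpos.ne'
  have q2b : (d₁ - d₂) * (1 - (c₂^2 + d₂^2)) = 0 := by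
    have h0 : (d₁ - d₂) * (1 - (c₂^2 + d₂^2)) *
        ((1 - c₁ * c₂ - d₁ * d₂)^2 + (c₁ * d₂ - c₂ * d₁)^2) = 0 := by
      linear_combination (-(c₁*d₂ - c₂*d₁)/2) * e1 + ((1 - c₁*c₂ - d₁*d₂)/2) * e2
    exact (mul_eq_zero.mp h0).resolve_right hDpos.ne'
  have q1a : (c₁ - c₂) * (1 - (c₁^2 + d₁^2)) = 0 := by
    have h0 : (c₁ - c₂) * (1 - (c₁^2 + d₁^2)) *
        ((1 - c₁ * c₂ - d₁ * d₂)^2 + (c₁ * d₂ - c₂ * d₁)^2) = 0 := by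
      linear_combination (-(1 - c₁*c₂ - d₁*d₂)/2) * e3 + ((c₁*d₂ - c₂*d₁)/2) * e4
    exact (mul_eq_zero.mp h0).resolve_right hDpos.ne'
  have q1b : (d₁ - d₂) * (1 - (c₁^2 + d₁^2)) = 0 := by
    have h0 : (d₁ - d₂) * (1 - (c₁^2 + d₁^2)) *
        ((1 - c₁ * c₂ - d₁ * d₂)^2 + (c₁ * d₂ - c₂ * d₁)^2) = 0 := by
      linear_combination (-(c₁*d₂ - c₂*d₁)/2) * e3 + (-(1 - c₁*c₂ - d₁*d₂)/2) * e4
    exact (mul_eq_zero.mp h0).resolve_right hDpos.ne'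
  rcases huv with h | h
  · have r2 : 1 - (c₂^2 + d₂^2) = 0 := (mul_eq_zero.mp q2a).resolve_left h
    have r1 : 1 - (c₁^2 + d₁^2) = 0 := (mul_eq_zero.mp q1a).resolve_left h
    linarith
  · have r2 : 1 - (c₂^2 + d₂^2) = 0 := (mul_eq_zero.mp q2b).resolve_left h
    have r1 : 1 - (c₁^2 + d₁^2) = 0 := (mul_eq_zero.mp q1b).resolve_left h
    linarith
end

section
/- If (z₁,z₂) ∈ 𝒟₁ = {(z₁,z₂) ∈ ℂ² : 1+|z₁|²−|z₂|² > |1+z₁²−z₂²| and Im(z₁(1+conj(z₂))) > 0}, then Im(z₁) > 0 and z₂ does not lie in (−∞,−1] ∪ [1,∞) ⊂ ℝ. -/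
open Complex

/-- Points of `𝒟₁` have first coordinate in the upper half plane and second coordinate
outside `(−∞,−1] ∪ [1,∞)`. -/
theorem stmt12 (z₁ z₂ : ℂ)
    (h1 : ‖1 + z₁ ^ 2 - z₂ ^ 2‖ < 1 + ‖z₁‖ ^ 2 - ‖z₂‖ ^ 2)
    (h2 : 0 < (z₁ * (1 + (starRingEnd ℂ) z₂)).im) :
    0 < z₁.im ∧ ∀ x : ℝ, (x ≤ -1 ∨ 1 ≤ x) → z₂ ≠ (x : ℂ) := by
  have h0 : (0:ℝ) ≤ ‖1 + z₁ ^ 2 - z₂ ^ 2‖ := norm_nonneg _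
  have h1' : ‖1 + z₁ ^ 2 - z₂ ^ 2‖ ^ 2
      < (1 + ‖z₁‖ ^ 2 - ‖z₂‖ ^ 2) ^ 2 := by
    have := mul_self_lt_mul_self h0 h1
    nlinarith [this]
  rw [Complex.sq_norm, Complex.sq_norm, Complex.sq_norm] at h1'
  simp only [Complex.normSq_apply, Complex.add_re, Complex.add_im, Complex.sub_re,
    Complex.sub_im, Complex.one_re, Complex.one_im, pow_two, Complex.mul_re,
    Complex.mul_im] at h1'
  have key : z₂.im ^ 2 + (z₁.im * z₂.re - z₁.re * z₂.im) ^ 2 < z₁.im ^ 2 := by nlinarith [h1']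
  have h2' : 0 < z₁.im + (z₁.im * z₂.re - z₁.re * z₂.im) := by
    have := h2
    simp only [Complex.mul_im, Complex.add_re, Complex.add_im, Complex.one_re, Complex.one_im,
      Complex.conj_re, Complex.conj_im] at this
    nlinarith [this]
  have him : 0 < z₁.im := by nlinarith [key, h2', sq_nonneg (z₁.im + (z₁.im * z₂.re - z₁.re * z₂.im))]
  refine ⟨him, ?_⟩
  intro x hx heq
  have hre : z₂.re = x := by rw [heq]; simp
  have him2 : z₂.im = 0 := by rw [heq]; simp
  have hx2 : 1 ≤ x ^ 2 := by rcases hx with h | h <;> nlinarith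
  rw [hre, him2] at key
  nlinarith [key, hx2, sq_nonneg z₁.im]
end

section
/- The map F(s,p) = (i(1+p)/(1−p), −is/(1−p)) is a bijective holomorphic map from the symmetrized bidisc 𝔾 onto the domain 𝒟₁ = {(z₁,z₂) ∈ ℂ² : 1+|z₁|²−|z₂|² > |1+z₁²−z₂²|, Im(z₁(1+conj(z₂))) > 0}. -/
open Complex

/-- The symmetrized bidisc. -/
def symBidisc : Set (ℂ × ℂ) :=
  {sp | ∃ z₁ z₂ : ℂ, ‖z₁‖ < 1 ∧ ‖z₂‖ < 1 ∧ sp = (z₁ + z₂, z₁ * z₂)}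

/-- Isaev's domain `𝒟₁`. -/
def D1 : Set (ℂ × ℂ) :=
  {z | ‖1 + z.1 ^ 2 - z.2 ^ 2‖ < 1 + ‖z.1‖ ^ 2 - ‖z.2‖ ^ 2 ∧
    0 < (z.1 * (1 + (starRingEnd ℂ) z.2)).im}

/-- core numeric lemma: roots can't both be outside the disc -/
private lemma numeric_aux' (w₁ w₂ : ℂ)
    (h1 : normSq (w₁ - w₂) < 2 + 2 * normSq w₁ * normSq w₂ - normSq (w₁ + w₂))
    (h2 : 0 < 1 - normSq w₁ * normSq w₂ + w₁.im * (1 - normSq w₂) + w₂.im * (1 - normSq w₁))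
    (hn : 1 ≤ normSq w₁) : False := by
  have hprod : 0 < (1 - normSq w₁) * (1 - normSq w₂) := by
    nlinarith [Complex.normSq_sub w₁ w₂, Complex.normSq_add w₁ w₂]
  have hn2 : 1 < normSq w₂ := by nlinarith
  have hn1 : 1 < normSq w₁ := by nlinarith
  set a := ‖w₁‖ with ha
  set b := ‖w₂‖ with hb
  have ha2 : a ^ 2 = normSq w₁ := Complex.sq_norm w₁
  have hb2 : b ^ 2 = normSq w₂ := Complex.sq_norm w₂
  have ha0 : 0 ≤ a := norm_nonneg w₁
  have hb0 : 0 ≤ b := norm_nonneg w₂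
  have ha1 : 1 ≤ a := by nlinarith
  have hb1 : 1 ≤ b := by nlinarith
  have hy1 : -a ≤ w₁.im := by
    have := Complex.abs_im_le_norm w₁
    have := abs_le.1 this
    linarith [this.1]
  have hy2 : -b ≤ w₂.im := by
    have := Complex.abs_im_le_norm w₂
    have := abs_le.1 this
    linarith [this.1]
  have t1 : 0 ≤ (a + w₁.im) * (normSq w₂ - 1) := mul_nonneg (by linarith) (by linarith)
  have t2 : 0 ≤ (b + w₂.im) * (normSq w₁ - 1) := mul_nonneg (by linarith) (by linarith)
  have t3 : (1 - a) * (1 - b) * (1 - a * b) ≤ 0 := by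
    have hab : 1 ≤ a * b := by nlinarith
    have : 0 ≤ (1 - a) * (1 - b) := by nlinarith
    nlinarith
  nlinarith [h2, t1, t2, t3, ha2, hb2]

private lemma numeric_iff' (w₁ w₂ : ℂ) :
    (normSq (w₁ - w₂) < 2 + 2 * normSq w₁ * normSq w₂ - normSq (w₁ + w₂) ∧
      0 < 1 - normSq w₁ * normSq w₂ + w₁.im * (1 - normSq w₂) + w₂.im * (1 - normSq w₁)) ↔
    ‖w₁‖ < 1 ∧ ‖w₂‖ < 1 := by
  constructor
  · rintro ⟨h1, h2⟩
    have hs1 : ¬ (1 ≤ normSq w₁) := fun hn => numeric_aux' w₁ w₂ h1 h2 hn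
    have hs2 : ¬ (1 ≤ normSq w₂) := by
      intro hn
      apply numeric_aux' w₂ w₁ ?_ ?_ hn
      · have e : w₂ - w₁ = -(w₁ - w₂) := by ring
        rw [e, normSq_neg, show w₂ + w₁ = w₁ + w₂ by ring]
        nlinarith
      · nlinarith
    push_neg at hs1 hs2
    constructor
    · nlinarith [Complex.sq_norm w₁, norm_nonneg w₁]
    · nlinarith [Complex.sq_norm w₂, norm_nonneg w₂]
  · rintro ⟨h1, h2⟩
    have ha0 : 0 ≤ ‖w₁‖ := norm_nonneg w₁
    have hb0 : 0 ≤ ‖w₂‖ := norm_nonneg w₂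
    have ha2 : ‖w₁‖ ^ 2 = normSq w₁ := Complex.sq_norm w₁
    have hb2 : ‖w₂‖ ^ 2 = normSq w₂ := Complex.sq_norm w₂
    have hn1 : normSq w₁ < 1 := by nlinarith
    have hn2 : normSq w₂ < 1 := by nlinarith
    constructor
    · nlinarith [Complex.normSq_sub w₁ w₂, Complex.normSq_add w₁ w₂]
    · have hy1 : -‖w₁‖ ≤ w₁.im := by
        have := abs_le.1 (Complex.abs_im_le_norm w₁); linarith [this.1]
      have hy2 : -‖w₂‖ ≤ w₂.im := by
        have := abs_le.1 (Complex.abs_im_le_norm w₂); linarith [this.1]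
      have t1 : 0 ≤ (‖w₁‖ + w₁.im) * (1 - normSq w₂) :=
        mul_nonneg (by linarith) (by linarith)
      have t2 : 0 ≤ (‖w₂‖ + w₂.im) * (1 - normSq w₁) :=
        mul_nonneg (by linarith) (by linarith)
      have t3 : 0 < (1 - ‖w₁‖) * (1 - ‖w₂‖) * (1 - ‖w₁‖ * ‖w₂‖) := by
        have : ‖w₁‖ * ‖w₂‖ < 1 := by nlinarith
        exact mul_pos (mul_pos (by linarith) (by linarith)) (by linarith)
      nlinarith [t1, t2, t3]


private lemma cond1_iff' (w₁ w₂ : ℂ) (hd : 1 - w₁ * w₂ ≠ 0) :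
    ‖1 + (I * (1 + w₁ * w₂) / (1 - w₁ * w₂)) ^ 2
        - (-I * (w₁ + w₂) / (1 - w₁ * w₂)) ^ 2‖
      < 1 + ‖I * (1 + w₁ * w₂) / (1 - w₁ * w₂)‖ ^ 2
        - ‖-I * (w₁ + w₂) / (1 - w₁ * w₂)‖ ^ 2 ↔
    normSq (w₁ - w₂) < 2 + 2 * normSq w₁ * normSq w₂ - normSq (w₁ + w₂) := by
  have hN : 0 < normSq (1 - w₁ * w₂) := normSq_pos.2 hd
  have e1 : 1 + (I * (1 + w₁ * w₂) / (1 - w₁ * w₂)) ^ 2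
      - (-I * (w₁ + w₂) / (1 - w₁ * w₂)) ^ 2
      = ((w₁ - w₂) / (1 - w₁ * w₂)) ^ 2 := by
    field_simp
    ring_nf
    simp [Complex.I_sq]
    ring
  rw [e1]
  rw [norm_pow, Complex.sq_norm, Complex.sq_norm, Complex.sq_norm]
  rw [normSq_div, normSq_div, normSq_div, normSq_mul, normSq_mul, Complex.normSq_I]
  have hnI : normSq (-I) = 1 := by simp
  rw [hnI, one_mul, one_mul]
  have key : normSq (1 - w₁ * w₂) + normSq (1 + w₁ * w₂) = 2 + 2 * normSq w₁ * normSq w₂ := by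
    rw [Complex.normSq_sub, Complex.normSq_add, Complex.normSq_mul]
    simp; ring
  rw [show (1:ℝ) + normSq (1 + w₁ * w₂) / normSq (1 - w₁ * w₂)
      - normSq (w₁ + w₂) / normSq (1 - w₁ * w₂)
      = (normSq (1 - w₁ * w₂) + normSq (1 + w₁ * w₂) - normSq (w₁ + w₂)) / normSq (1 - w₁ * w₂)
    by field_simp]
  rw [div_lt_div_iff_of_pos_right hN]
  constructor <;> intro h <;> linarith

private lemma cond2_iff' (w₁ w₂ : ℂ) (hd : 1 - w₁ * w₂ ≠ 0) :
    0 < (I * (1 + w₁ * w₂) / (1 - w₁ * w₂)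
          * (1 + (starRingEnd ℂ) (-I * (w₁ + w₂) / (1 - w₁ * w₂)))).im ↔
    0 < 1 - normSq w₁ * normSq w₂ + w₁.im * (1 - normSq w₂) + w₂.im * (1 - normSq w₁) := by
  have hN : 0 < normSq (1 - w₁ * w₂) := normSq_pos.2 hd
  have hcd : (starRingEnd ℂ) (1 - w₁ * w₂) ≠ 0 := by
    simpa using (star_ne_zero.2 hd)
  have e : I * (1 + w₁ * w₂) / (1 - w₁ * w₂)
      * (1 + (starRingEnd ℂ) (-I * (w₁ + w₂) / (1 - w₁ * w₂)))
      = (I * (1 + w₁ * w₂) * ((starRingEnd ℂ) (1 - w₁ * w₂)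
          + I * (starRingEnd ℂ) (w₁ + w₂))) / ((normSq (1 - w₁ * w₂) : ℝ) : ℂ) := by
    rw [show (((normSq (1 - w₁ * w₂) : ℝ)) : ℂ) = (1 - w₁ * w₂) * (starRingEnd ℂ) (1 - w₁ * w₂)
      from (Complex.mul_conj _).symm]
    have hcd' : 1 - (starRingEnd ℂ) w₁ * (starRingEnd ℂ) w₂ ≠ 0 := by
      intro h; apply hcd; rw [map_sub, map_mul, map_one]; exact h
    simp only [map_div₀, map_mul, map_neg, map_sub, map_add, map_one, Complex.conj_I]
    field_simp
  rw [e]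
  have him : ((I * (1 + w₁ * w₂) * ((starRingEnd ℂ) (1 - w₁ * w₂)
        + I * (starRingEnd ℂ) (w₁ + w₂))) / ((normSq (1 - w₁ * w₂) : ℝ) : ℂ)).im
      = (I * (1 + w₁ * w₂) * ((starRingEnd ℂ) (1 - w₁ * w₂)
        + I * (starRingEnd ℂ) (w₁ + w₂))).im / normSq (1 - w₁ * w₂) := by
    rw [Complex.div_im]
    simp [Complex.normSq_ofReal]
    field_simp
  rw [him]
  have hval : (I * (1 + w₁ * w₂) * ((starRingEnd ℂ) (1 - w₁ * w₂)
        + I * (starRingEnd ℂ) (w₁ + w₂))).im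
      = 1 - normSq w₁ * normSq w₂ + w₁.im * (1 - normSq w₂) + w₂.im * (1 - normSq w₁) := by
    simp [Complex.mul_im, Complex.mul_re, Complex.add_re, Complex.add_im, Complex.sub_re,
      Complex.sub_im, Complex.one_re, Complex.one_im, Complex.I_re, Complex.I_im,
      Complex.conj_re, Complex.conj_im, Complex.normSq_apply]
    ring
  rw [hval]
  constructor
  · intro h
    rcases div_pos_iff.1 h with ⟨h', _⟩ | ⟨_, h'⟩
    · exact h'
    · linarith
  · intro h
    exact div_pos h hN

private lemma keyIff (w₁ w₂ : ℂ) (hd : 1 - w₁ * w₂ ≠ 0) :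
    ((I * (1 + w₁ * w₂) / (1 - w₁ * w₂), -I * (w₁ + w₂) / (1 - w₁ * w₂)) : ℂ × ℂ) ∈ D1 ↔
    ‖w₁‖ < 1 ∧ ‖w₂‖ < 1 := by
  rw [D1, Set.mem_setOf_eq]
  rw [show ((I * (1 + w₁ * w₂) / (1 - w₁ * w₂), -I * (w₁ + w₂) / (1 - w₁ * w₂)) : ℂ × ℂ).1
      = I * (1 + w₁ * w₂) / (1 - w₁ * w₂) from rfl,
    show ((I * (1 + w₁ * w₂) / (1 - w₁ * w₂), -I * (w₁ + w₂) / (1 - w₁ * w₂)) : ℂ × ℂ).2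
      = -I * (w₁ + w₂) / (1 - w₁ * w₂) from rfl]
  rw [cond1_iff' w₁ w₂ hd, cond2_iff' w₁ w₂ hd]
  exact numeric_iff' w₁ w₂

private lemma symBidisc_snd {sp : ℂ × ℂ} (h : sp ∈ symBidisc) : 1 - sp.2 ≠ 0 := by
  obtain ⟨z₁, z₂, h₁, h₂, rfl⟩ := h
  have habs : ‖z₁ * z₂‖ < 1 := by
    rw [norm_mul]
    nlinarith [norm_nonneg z₁, norm_nonneg z₂]
  intro h
  rw [sub_eq_zero] at h
  have h' : (1:ℂ) = z₁ * z₂ := h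
  rw [← h'] at habs
  simp at habs


/-- The map `F(s,p) = (i(1+p)/(1−p), −is/(1−p))` is a holomorphic bijection from
the symmetrized bidisc `𝔾` onto `𝒟₁`. -/
theorem stmt13 :
    Set.BijOn (fun sp : ℂ × ℂ => (I * (1 + sp.2) / (1 - sp.2), -I * sp.1 / (1 - sp.2)))
      symBidisc D1 ∧
    DifferentiableOn ℂ
      (fun sp : ℂ × ℂ => (I * (1 + sp.2) / (1 - sp.2), -I * sp.1 / (1 - sp.2)))
      symBidisc := by
  constructor
  · refine ⟨?_, ?_, ?_⟩
    · -- MapsTo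
      rintro sp hsp
      have hd := symBidisc_snd hsp
      obtain ⟨z₁, z₂, h₁, h₂, rfl⟩ := hsp
      simp only at hd ⊢
      exact (keyIff z₁ z₂ hd).2 ⟨h₁, h₂⟩
    · -- InjOn
      rintro sp hsp sq hsq heq
      have hd1 := symBidisc_snd hsp
      have hd2 := symBidisc_snd hsq
      have e1 : I * (1 + sp.2) / (1 - sp.2) = I * (1 + sq.2) / (1 - sq.2) :=
        congrArg Prod.fst heq
      have e2 : -I * sp.1 / (1 - sp.2) = -I * sq.1 / (1 - sq.2) :=
        congrArg Prod.snd heq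
      have hc1 := (div_eq_div_iff hd1 hd2).1 e1
      have hp : sp.2 = sq.2 := by
        have hI2 : (2 * I : ℂ) ≠ 0 := by simp [Complex.I_ne_zero]
        apply mul_left_cancel₀ hI2
        linear_combination hc1
      rw [hp] at e2
      have hc2 := (div_eq_div_iff hd2 hd2).1 e2
      have hc3 := mul_right_cancel₀ hd2 hc2
      have hs : sp.1 = sq.1 := by
        apply mul_left_cancel₀ (neg_ne_zero.2 Complex.I_ne_zero)
        exact hc3
      exact Prod.ext hs hp
    · -- SurjOn
      rintro z hz
      obtain ⟨hz1, hz2⟩ := hz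
      have hI : z.1 ≠ -I := by
        intro h
        rw [h] at hz1 hz2
        have e1 : ‖1 + (-I) ^ 2 - z.2 ^ 2‖ = ‖z.2‖ ^ 2 := by
          rw [show 1 + (-I) ^ 2 - z.2 ^ 2 = -(z.2 ^ 2) by simp [Complex.I_sq]]
          rw [norm_neg, norm_pow]
        have e2 : ‖-I‖ = 1 := by simp
        rw [e1, e2] at hz1
        have habs : ‖z.2‖ < 1 := by
          nlinarith [norm_nonneg z.2]
        have hre : -1 < z.2.re := by
          have := abs_le.1 (Complex.abs_re_le_norm z.2)
          linarith [this.1]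
        have : ((-I) * (1 + (starRingEnd ℂ) z.2)).im = -(1 + z.2.re) := by
          simp [Complex.mul_im, Complex.add_re, Complex.conj_re]
        rw [this] at hz2
        linarith
      have ht : z.1 + I ≠ 0 := by
        intro h
        exact hI (by linear_combination h)
      set p : ℂ := (z.1 - I) / (z.1 + I) with hpdef
      set s : ℂ := -2 * z.2 / (z.1 + I) with hsdef
      have h1p : 1 - p = 2 * I / (z.1 + I) := by
        rw [hpdef]; field_simp; ring
      have hdp : 1 - p ≠ 0 := by
        rw [h1p]
        exact div_ne_zero (by norm_num [Complex.I_ne_zero]) ht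
      have hFp : I * (1 + p) / (1 - p) = z.1 := by
        rw [h1p, hpdef]
        field_simp
        ring_nf
      have hFs : -I * s / (1 - p) = z.2 := by
        rw [h1p, hsdef]
        field_simp
      obtain ⟨q, hq⟩ := IsAlgClosed.exists_pow_nat_eq (k := ℂ) (s ^ 2 - 4 * p) (n := 2) (by norm_num)
      set w₁ : ℂ := (s + q) / 2 with hw1
      set w₂ : ℂ := (s - q) / 2 with hw2
      have hsum : w₁ + w₂ = s := by rw [hw1, hw2]; ring
      have hprod : w₁ * w₂ = p := by
        rw [hw1, hw2]
        linear_combination (-(1:ℂ)/4) * hq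
      have hd : 1 - w₁ * w₂ ≠ 0 := by rw [hprod]; exact hdp
      have hmem : ((I * (1 + w₁ * w₂) / (1 - w₁ * w₂),
          -I * (w₁ + w₂) / (1 - w₁ * w₂)) : ℂ × ℂ) ∈ D1 := by
        rw [hprod, hsum, hFp, hFs]
        exact ⟨hz1, hz2⟩
      obtain ⟨hw1lt, hw2lt⟩ := (keyIff w₁ w₂ hd).1 hmem
      refine ⟨(s, p), ⟨w₁, w₂, hw1lt, hw2lt, by rw [hsum, hprod]⟩, ?_⟩
      simp only
      rw [hFp, hFs]
  · -- DifferentiableOn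
    have hden : ∀ sp ∈ symBidisc, (1 - sp.2 : ℂ) ≠ 0 := fun sp hsp => symBidisc_snd hsp
    have hA : DifferentiableOn ℂ (fun sp : ℂ × ℂ => I * (1 + sp.2)) symBidisc :=
      ((differentiable_const I).mul ((differentiable_const 1).add differentiable_snd)).differentiableOn
    have hB : DifferentiableOn ℂ (fun sp : ℂ × ℂ => -I * sp.1) symBidisc :=
      ((differentiable_const (-I)).mul differentiable_fst).differentiableOn
    have hD : DifferentiableOn ℂ (fun sp : ℂ × ℂ => 1 - sp.2) symBidisc :=
      ((differentiable_const 1).sub differentiable_snd).differentiableOn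
    simp only [div_eq_mul_inv]
    exact DifferentiableOn.prodMk (hA.mul (hD.inv hden)) (hB.mul (hD.inv hden))
end

section
/- For z₁, z₂ ∈ 𝔻 with (s,p) = (z₁+z₂, z₁z₂), one has the identity |1 + (i(1+p)/(1−p))² − (−is/(1−p))²| / (1 + |i(1+p)/(1−p)|² − |−is/(1−p)|²) = d²/(2 − d²), where d = |(z₁−z₂)/(1−conj(z₁)z₂)| is the Möbius distance; in particular this ratio lies in [0,1). -/
open Complex

/-- For `(s,p) = (z₁+z₂, z₁z₂)` with `z₁,z₂ ∈ 𝔻`, the ratio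
`|1 + (i(1+p)/(1−p))² − (−is/(1−p))²| / (1 + |i(1+p)/(1−p)|² − |−is/(1−p)|²)` equals
`d²/(2−d²)`, where `d` is the Möbius distance of `z₁` and `z₂`; in particular it
lies in `[0,1)`. -/
theorem stmt14 (z₁ z₂ : ℂ) (h₁ : ‖z₁‖ < 1) (h₂ : ‖z₂‖ < 1)
    (s p : ℂ) (hs : s = z₁ + z₂) (hp : p = z₁ * z₂) (d : ℝ)
    (hd : d = ‖(z₁ - z₂) / (1 - (starRingEnd ℂ) z₁ * z₂)‖) :
    ‖1 + (I * (1 + p) / (1 - p)) ^ 2 - (-I * s / (1 - p)) ^ 2‖ /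
        (1 + ‖I * (1 + p) / (1 - p)‖ ^ 2 -
          ‖-I * s / (1 - p)‖ ^ 2) = d ^ 2 / (2 - d ^ 2) ∧
      0 ≤ d ^ 2 / (2 - d ^ 2) ∧ d ^ 2 / (2 - d ^ 2) < 1 := by
  subst hs hp hd
  have hz1 : Complex.normSq z₁ < 1 := by
    have := Complex.sq_norm z₁ ▸ (by nlinarith [norm_nonneg z₁] : ‖z₁‖ ^ 2 < 1)
    linarith
  have hz2 : Complex.normSq z₂ < 1 := by
    have := Complex.sq_norm z₂ ▸ (by nlinarith [norm_nonneg z₂] : ‖z₂‖ ^ 2 < 1)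
    linarith
  have hpabs : ‖z₁ * z₂‖ < 1 := by
    rw [norm_mul]
    nlinarith [norm_nonneg z₁, norm_nonneg z₂]
  have hq : (1 : ℂ) - z₁ * z₂ ≠ 0 := by
    intro h
    have : ‖z₁ * z₂‖ = 1 := by
      have : (z₁ * z₂ : ℂ) = 1 := by linear_combination -h
      rw [this]; simp
    linarith
  have hc : (1 : ℂ) - (starRingEnd ℂ) z₁ * z₂ ≠ 0 := by
    intro h
    have h1 : ((starRingEnd ℂ) z₁ * z₂ : ℂ) = 1 := by linear_combination -h
    have : ‖(starRingEnd ℂ) z₁ * z₂‖ = 1 := by rw [h1]; simp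
    rw [norm_mul, Complex.norm_conj] at this
    nlinarith [norm_nonneg z₁, norm_nonneg z₂]
  -- key identity
  have key : Complex.normSq (1 - (starRingEnd ℂ) z₁ * z₂) - Complex.normSq (z₁ - z₂)
      = (1 - Complex.normSq z₁) * (1 - Complex.normSq z₂) := by
    simp only [Complex.normSq_apply, Complex.sub_re, Complex.sub_im, Complex.mul_re,
      Complex.mul_im, Complex.one_re, Complex.one_im, Complex.conj_re, Complex.conj_im]
    ring
  have key2 : Complex.normSq (1 - z₁ * z₂) + Complex.normSq (1 + z₁ * z₂)
      - Complex.normSq (z₁ + z₂)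
      = 2 * Complex.normSq (1 - (starRingEnd ℂ) z₁ * z₂) - Complex.normSq (z₁ - z₂) := by
    simp only [Complex.normSq_apply, Complex.sub_re, Complex.sub_im, Complex.add_re,
      Complex.add_im, Complex.mul_re, Complex.mul_im, Complex.one_re, Complex.one_im,
      Complex.conj_re, Complex.conj_im]
    ring
  set N1 := Complex.normSq (z₁ - z₂) with hN1
  set N3 := Complex.normSq (1 - (starRingEnd ℂ) z₁ * z₂) with hN3
  have hN3pos : 0 < N3 := Complex.normSq_pos.mpr hc
  have hN1nn : 0 ≤ N1 := Complex.normSq_nonneg _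
  have hlt : N1 < N3 := by nlinarith
  have hd2 : ‖(z₁ - z₂) / (1 - (starRingEnd ℂ) z₁ * z₂)‖ ^ 2 = N1 / N3 := by
    rw [norm_div, div_pow, Complex.sq_norm, Complex.sq_norm]
  -- numerator
  have hnum : (1 : ℂ) + (I * (1 + z₁ * z₂) / (1 - z₁ * z₂)) ^ 2
      - (-I * (z₁ + z₂) / (1 - z₁ * z₂)) ^ 2 = (z₁ - z₂) ^ 2 / (1 - z₁ * z₂) ^ 2 := by
    field_simp
    linear_combination (z₁^2*z₂^2 - z₁^2 - z₂^2 + 1) * Complex.I_sq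
  have hN2pos : 0 < Complex.normSq (1 - z₁ * z₂) := Complex.normSq_pos.mpr hq
  have habsnum : ‖(z₁ - z₂) ^ 2 / (1 - z₁ * z₂) ^ 2‖
      = N1 / Complex.normSq (1 - z₁ * z₂) := by
    rw [norm_div, norm_pow, norm_pow, Complex.sq_norm, Complex.sq_norm]
  have hden : 1 + ‖I * (1 + z₁ * z₂) / (1 - z₁ * z₂)‖ ^ 2 -
      ‖-I * (z₁ + z₂) / (1 - z₁ * z₂)‖ ^ 2
      = (2 * N3 - N1) / Complex.normSq (1 - z₁ * z₂) := by
    rw [norm_div, norm_div, div_pow, div_pow, Complex.sq_norm, Complex.sq_norm,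
      Complex.sq_norm, map_mul, map_mul, Complex.normSq_I, Complex.normSq_neg,
      Complex.normSq_I, one_mul, one_mul]
    field_simp
    linarith [key2]
  rw [hd2, hnum, habsnum, hden]
  have h2N : 0 < 2 * N3 - N1 := by linarith
  have hfr : 0 < 2 - N1 / N3 := by
    have : N1 / N3 < 1 := (div_lt_one hN3pos).mpr hlt
    linarith
  refine ⟨?_, ?_, ?_⟩
  · field_simp
  · positivity
  · rw [div_lt_one hfr]
    have : N1 / N3 < 1 := (div_lt_one hN3pos).mpr hlt
    linarith
end

section
/- A point (s,p) ∈ ℂ² belongs to the symmetrized bidisc 𝔾 if and only if |p|² + Im(conj(s)·p + conj(s)) < 1 and 2 + 2|p|² > |s|² + |s² − 4p|. -/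
open Complex

lemma aux_im (z₁ z₂ : ℂ) :
    ((starRingEnd ℂ) (z₁ + z₂) * (z₁ * z₂) + (starRingEnd ℂ) (z₁ + z₂)).im
      = (Complex.normSq z₁ - 1) * z₂.im + (Complex.normSq z₂ - 1) * z₁.im := by
  simp [Complex.normSq_apply, Complex.mul_im, Complex.add_im, Complex.add_re, Complex.mul_re]
  ring

lemma aux_norm (z₁ z₂ : ℂ) :
    Complex.normSq (z₁ + z₂) + Complex.normSq (z₁ - z₂)
      = 2 * Complex.normSq z₁ + 2 * Complex.normSq z₂ := by
  simp [Complex.normSq_apply]; ring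

lemma aux_B (z₁ z₂ : ℂ) :
    ‖z₁ + z₂‖ ^ 2 + ‖(z₁ + z₂) ^ 2 - 4 * (z₁ * z₂)‖
      = 2 * ‖z₁‖ ^ 2 + 2 * ‖z₂‖ ^ 2 := by
  have h : (z₁ + z₂) ^ 2 - 4 * (z₁ * z₂) = (z₁ - z₂) ^ 2 := by ring
  rw [h, norm_pow]
  simp only [Complex.sq_norm]
  exact aux_norm z₁ z₂

/-- A point `(s,p) ∈ ℂ²` belongs to the symmetrized bidisc if and only if
`|p|² + Im(conj(s)p + conj(s)) < 1` and `2 + 2|p|² > |s|² + |s² − 4p|`. -/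
theorem stmt16 (s p : ℂ) :
    (∃ z₁ z₂ : ℂ, ‖z₁‖ < 1 ∧ ‖z₂‖ < 1 ∧ s = z₁ + z₂ ∧ p = z₁ * z₂) ↔
    (‖p‖ ^ 2 + ((starRingEnd ℂ) s * p + (starRingEnd ℂ) s).im < 1 ∧
      ‖s‖ ^ 2 + ‖s ^ 2 - 4 * p‖ < 2 + 2 * ‖p‖ ^ 2) := by
  constructor
  · rintro ⟨z₁, z₂, h₁, h₂, rfl, rfl⟩
    set x := ‖z₁‖ with hx
    set y := ‖z₂‖ with hy
    have hx0 : 0 ≤ x := norm_nonneg z₁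
    have hy0 : 0 ≤ y := norm_nonneg z₂
    have hu : -x ≤ z₁.im ∧ z₁.im ≤ x := abs_le.mp (Complex.abs_im_le_norm z₁)
    have hv : -y ≤ z₂.im ∧ z₂.im ≤ y := abs_le.mp (Complex.abs_im_le_norm z₂)
    have hn₁ : Complex.normSq z₁ = x ^ 2 := (Complex.sq_norm z₁).symm
    have hn₂ : Complex.normSq z₂ = y ^ 2 := (Complex.sq_norm z₂).symm
    constructor
    · rw [aux_im, hn₁, hn₂, norm_mul, ← hx, ← hy]
      nlinarith [mul_pos (mul_pos (sub_pos.2 h₁) (sub_pos.2 h₂))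
          (by nlinarith : (0:ℝ) < 1 - x * y),
        mul_nonneg (by nlinarith : (0:ℝ) ≤ 1 - x ^ 2) (by linarith [hv.1] : (0:ℝ) ≤ y + z₂.im),
        mul_nonneg (by nlinarith : (0:ℝ) ≤ 1 - y ^ 2) (by linarith [hu.1] : (0:ℝ) ≤ x + z₁.im)]
    · rw [aux_B, norm_mul, ← hx, ← hy]
      nlinarith [mul_pos (mul_pos (mul_pos (sub_pos.2 h₁) (sub_pos.2 h₂))
        (by nlinarith : (0:ℝ) < 1 + x)) (by nlinarith : (0:ℝ) < 1 + y)]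
  · rintro ⟨hA, hB⟩
    obtain ⟨d, hd⟩ := IsAlgClosed.exists_pow_nat_eq (s ^ 2 - 4 * p) zero_lt_two
    set z₁ : ℂ := (s + d) / 2 with hz₁
    set z₂ : ℂ := (s - d) / 2 with hz₂
    have hs : s = z₁ + z₂ := by rw [hz₁, hz₂]; ring
    have hp : p = z₁ * z₂ := by
      rw [hz₁, hz₂]; linear_combination (1/4 : ℂ) * hd
    clear hz₁ hz₂
    clear_value z₁ z₂
    clear hd
    rw [hs, hp] at hA hB
    rw [aux_B] at hB
    rw [aux_im] at hA
    set x := ‖z₁‖ with hx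
    set y := ‖z₂‖ with hy
    have hx0 : 0 ≤ x := norm_nonneg z₁
    have hy0 : 0 ≤ y := norm_nonneg z₂
    have hu : -x ≤ z₁.im ∧ z₁.im ≤ x := abs_le.mp (Complex.abs_im_le_norm z₁)
    have hv : -y ≤ z₂.im ∧ z₂.im ≤ y := abs_le.mp (Complex.abs_im_le_norm z₂)
    rw [Complex.normSq_eq_norm_sq, Complex.normSq_eq_norm_sq, norm_mul, ← hx, ← hy] at hA
    rw [norm_mul, ← hx, ← hy] at hB
    have hprod : (0:ℝ) < (1 - x ^ 2) * (1 - y ^ 2) := by nlinarith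
    have hx1 : x < 1 := by
      by_contra hge
      push_neg at hge
      have hx2 : 1 ≤ x ^ 2 := by nlinarith
      have hy2 : 1 < y ^ 2 := by nlinarith
      have hx2' : 1 < x ^ 2 := by nlinarith
      have hxgt : 1 < x := by nlinarith
      have hygt : 1 < y := by nlinarith
      have h1 : (0:ℝ) < (x - 1) * (y - 1) * (x * y - 1) :=
        mul_pos (mul_pos (by linarith) (by linarith)) (by nlinarith)
      have h2 : (0:ℝ) ≤ (x ^ 2 - 1) * (y + z₂.im) :=
        mul_nonneg (by linarith) (by linarith [hv.1])
      have h3 : (0:ℝ) ≤ (y ^ 2 - 1) * (x + z₁.im) :=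
        mul_nonneg (by linarith) (by linarith [hu.1])
      nlinarith [h1, h2, h3]
    have hx2 : (0:ℝ) < 1 - x ^ 2 := by nlinarith
    have hy2 : (0:ℝ) < 1 - y ^ 2 := by
      rcases mul_pos_iff.mp hprod with ⟨h1, h2⟩ | ⟨h1, h2⟩
      · exact h2
      · nlinarith
    have hy1 : y < 1 := by nlinarith
    exact ⟨z₁, z₂, hx1, hy1, hs, hp⟩
end

section
/- The map H(z,w) = ((z−w)/(1−zw), −i(z+w)/(1−zw)) is a bijective holomorphic map from 𝔻 × 𝔻 onto the domain Ω₁ = {(u,v) ∈ ℂ² : |u|² + |v|² − 1 < |u² + v² − 1|}. Moreover, for (u,v) = H(z,w), one has |u² + v² − 1| > |u|² + |v|² − 1 if and only if (1−|z|²)(1−|w|²) > 0. -/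
open Complex

/-- Isaev's domain `Ω₁`. -/
def Omega1 : Set (ℂ × ℂ) :=
  {uv | ‖uv.1‖ ^ 2 + ‖uv.2‖ ^ 2 - 1 <
    ‖uv.1 ^ 2 + uv.2 ^ 2 - 1‖}

lemma key_eq (z w : ℂ) (hd : 1 - z * w ≠ 0) :
    ‖((z - w) / (1 - z * w)) ^ 2 + (-I * (z + w) / (1 - z * w)) ^ 2 - 1‖
      - (‖(z - w) / (1 - z * w)‖ ^ 2 +
          ‖-I * (z + w) / (1 - z * w)‖ ^ 2 - 1)
    = 2 * (1 - ‖z‖ ^ 2) * (1 - ‖w‖ ^ 2) / ‖1 - z * w‖ ^ 2 := by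
  have h1 : ((z - w) / (1 - z * w)) ^ 2 + (-I * (z + w) / (1 - z * w)) ^ 2 - 1
      = -((1 + z * w) / (1 - z * w)) ^ 2 := by
    field_simp
    ring_nf
    simp only [Complex.I_sq]; ring
  rw [h1]
  simp only [norm_neg, norm_pow, norm_div, norm_mul, Complex.norm_I, one_mul,
    div_pow]
  have hN : ‖1 - z * w‖ > 0 := norm_pos_iff.mpr hd
  have hkey : ‖1 + z * w‖ ^ 2 + ‖1 - z * w‖ ^ 2
      - ‖z - w‖ ^ 2 - ‖z + w‖ ^ 2
      = 2 * (1 - ‖z‖ ^ 2) * (1 - ‖w‖ ^ 2) := by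
    rw [Complex.sq_norm, Complex.sq_norm, Complex.sq_norm, Complex.sq_norm, Complex.sq_norm,
      Complex.sq_norm]
    simp [Complex.normSq_apply, Complex.mul_re, Complex.mul_im]
    ring
  field_simp
  linear_combination hkey

lemma key_iff (z w : ℂ) (hd : 1 - z * w ≠ 0) :
    ‖((z - w) / (1 - z * w)) ^ 2 + (-I * (z + w) / (1 - z * w)) ^ 2 - 1‖ >
      ‖(z - w) / (1 - z * w)‖ ^ 2 +
        ‖-I * (z + w) / (1 - z * w)‖ ^ 2 - 1 ↔
    0 < (1 - ‖z‖ ^ 2) * (1 - ‖w‖ ^ 2) := by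
  have hN : ‖1 - z * w‖ > 0 := norm_pos_iff.mpr hd
  rw [gt_iff_lt, ← sub_pos, key_eq z w hd]
  rw [div_pos_iff]
  constructor
  · rintro (⟨h1, -⟩ | ⟨-, h2⟩)
    · nlinarith
    · nlinarith
  · intro h
    left
    constructor
    · nlinarith
    · positivity


lemma den_ne (z w : ℂ) (hz : ‖z‖ < 1) (hw : ‖w‖ < 1) :
    1 - z * w ≠ 0 := by
  intro h
  have h1 : z * w = 1 := by linear_combination -h
  have : ‖z * w‖ < 1 := by
    rw [norm_mul]
    nlinarith [norm_nonneg z, norm_nonneg w]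
  rw [h1] at this
  simp at this

lemma inj_on : Set.InjOn
    (fun zw : ℂ × ℂ => ((zw.1 - zw.2) / (1 - zw.1 * zw.2),
      -I * (zw.1 + zw.2) / (1 - zw.1 * zw.2)))
    {zw : ℂ × ℂ | ‖zw.1‖ < 1 ∧ ‖zw.2‖ < 1} := by
  rintro ⟨z, w⟩ ⟨hz, hw⟩ ⟨z', w'⟩ ⟨hz', hw'⟩ heq
  simp only [Prod.mk.injEq] at heq
  obtain ⟨hu, hv⟩ := heq
  have hd : 1 - z * w ≠ 0 := den_ne z w hz hw
  have hd' : 1 - z' * w' ≠ 0 := den_ne z' w' hz' hw'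
  have h1 : (z - w) * (1 - z' * w') = (z' - w') * (1 - z * w) :=
    (div_eq_div_iff hd hd').mp hu
  have h2' : (-I * (z + w)) * (1 - z' * w') = (-I * (z' + w')) * (1 - z * w) :=
    (div_eq_div_iff hd hd').mp hv
  have h2 : (z + w) * (1 - z' * w') = (z' + w') * (1 - z * w) :=
    mul_left_cancel₀ (neg_ne_zero.mpr Complex.I_ne_zero)
      (show (-I) * ((z + w) * (1 - z' * w')) = (-I) * ((z' + w') * (1 - z * w)) by
        linear_combination h2')
  have hz1 : z * (1 - z' * w') = z' * (1 - z * w) := by linear_combination (h1 + h2) / 2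
  have hw1 : w * (1 - z' * w') = w' * (1 - z * w) := by linear_combination (h2 - h1) / 2
  have hq : z * w * (1 - z' * w') ^ 2 = z' * w' * (1 - z * w) ^ 2 := by
    linear_combination (w * (1 - z' * w')) * hz1 + (z' * (1 - z * w)) * hw1
  have hfac : (z * w - z' * w') * (1 - (z * w) * (z' * w')) = 0 := by
    linear_combination hq
  have hne : 1 - (z * w) * (z' * w') ≠ 0 := by
    intro h
    have h1' : (z * w) * (z' * w') = 1 := by linear_combination -h
    have : ‖(z * w) * (z' * w')‖ < 1 := by
      simp only [norm_mul]
      have A : ‖z‖ * ‖w‖ < 1 := by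
        nlinarith [norm_nonneg z, norm_nonneg w]
      have B : ‖z'‖ * ‖w'‖ < 1 := by
        nlinarith [norm_nonneg z', norm_nonneg w']
      nlinarith [mul_nonneg (norm_nonneg z) (norm_nonneg w),
        mul_nonneg (norm_nonneg z') (norm_nonneg w')]
    rw [h1'] at this
    simp at this
  have hzw : z * w = z' * w' := by
    rcases mul_eq_zero.mp hfac with h | h
    · linear_combination h
    · exact absurd h hne
  have hdd : (1 : ℂ) - z * w = 1 - z' * w' := by rw [hzw]
  have hz2 : z = z' := by
    have := hz1
    rw [← hdd] at this
    exact mul_right_cancel₀ hd this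
  have hw2 : w = w' := by
    have := hw1
    rw [← hdd] at this
    exact mul_right_cancel₀ hd this
  simp [hz2, hw2]


lemma root_spec (u v s ε a b : ℂ) (ha : a = u + I * v) (hb : b = -u + I * v)
    (hs : s ^ 2 = 1 + a * b) (hε : ε ^ 2 = 1) (ha0 : a ≠ 0) (hb0 : b ≠ 0)
    (hes : ε * s ≠ 1) :
    1 - ((-1 + ε * s) / b) * ((-1 + ε * s) / a) ≠ 0 ∧
    ((-1 + ε * s) / b - (-1 + ε * s) / a) / (1 - ((-1 + ε * s) / b) * ((-1 + ε * s) / a)) = u ∧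
    -I * ((-1 + ε * s) / b + (-1 + ε * s) / a) / (1 - ((-1 + ε * s) / b) * ((-1 + ε * s) / a)) = v := by
  have hd1 : 1 - ((-1 + ε * s) / b) * ((-1 + ε * s) / a) = 2 * (ε * s - 1) / (a * b) := by
    field_simp
    linear_combination (-s^2) * hε - hs
  have hd0 : 1 - ((-1 + ε * s) / b) * ((-1 + ε * s) / a) ≠ 0 := by
    rw [hd1]
    apply div_ne_zero _ (mul_ne_zero ha0 hb0)
    intro h
    apply hes
    linear_combination h / 2
  refine ⟨hd0, ?_, ?_⟩
  · rw [hd1]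
    have hes' : ε * s - 1 ≠ 0 := fun h => hes (by linear_combination h)
    field_simp
    linear_combination (ε*s-1) * (ha - hb)
  · rw [hd1]
    have hes' : ε * s - 1 ≠ 0 := fun h => hes (by linear_combination h)
    field_simp
    linear_combination (ε*s-1) * (-I*(ha + hb) - 2*v * Complex.I_sq)

lemma exists_pre (u v : ℂ)
    (h : ‖u‖ ^ 2 + ‖v‖ ^ 2 - 1 < ‖u ^ 2 + v ^ 2 - 1‖) :
    ∃ z w : ℂ, ‖z‖ < 1 ∧ ‖w‖ < 1 ∧
      (z - w) / (1 - z * w) = u ∧ -I * (z + w) / (1 - z * w) = v := by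
  obtain ⟨a, ha⟩ : ∃ a : ℂ, a = u + I * v := ⟨_, rfl⟩
  obtain ⟨b, hb⟩ : ∃ b : ℂ, b = -u + I * v := ⟨_, rfl⟩
  have hab : a * b = -(u ^ 2 + v ^ 2) := by
    rw [ha, hb]; linear_combination v ^ 2 * Complex.I_sq
  have habne : a * b ≠ -1 := by
    intro h'
    have huv : u ^ 2 + v ^ 2 = 1 := by linear_combination hab - h'
    have h0 : u ^ 2 + v ^ 2 - 1 = 0 := by rw [huv]; ring
    rw [h0] at h
    simp only [norm_zero] at h
    have hle : (1 : ℝ) ≤ ‖u‖ ^ 2 + ‖v‖ ^ 2 := by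
      have := norm_add_le (u ^ 2) (v ^ 2)
      rw [huv] at this
      simp only [norm_one, norm_pow] at this
      linarith
    linarith
  -- helper: positivity for any preimage
  have pos : ∀ z w : ℂ, 1 - z * w ≠ 0 → (z - w) / (1 - z * w) = u →
      -I * (z + w) / (1 - z * w) = v →
      0 < (1 - ‖z‖ ^ 2) * (1 - ‖w‖ ^ 2) := by
    intro z w hd h1 h2
    rw [← key_iff z w hd]
    rw [h1, h2]
    exact h
  have both_lt : ∀ z w : ℂ, 0 < (1 - ‖z‖ ^ 2) * (1 - ‖w‖ ^ 2) →
      ‖z‖ * ‖w‖ < 1 → ‖z‖ < 1 ∧ ‖w‖ < 1 := by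
    intro z w hp hlt
    rcases mul_pos_iff.mp hp with ⟨h1, h2⟩ | ⟨h1, h2⟩
    · constructor <;> nlinarith [norm_nonneg z, norm_nonneg w]
    · exfalso
      have hXY : 0 ≤ ‖z‖ * ‖w‖ :=
        mul_nonneg (norm_nonneg z) (norm_nonneg w)
      nlinarith [hXY, hlt, h1, h2]
  have ne_one : ∀ z w : ℂ, 0 < (1 - ‖z‖ ^ 2) * (1 - ‖w‖ ^ 2) →
      ‖z‖ * ‖w‖ ≠ 1 := by
    intro z w hp he
    have hXY : 0 ≤ ‖z‖ * ‖w‖ :=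
      mul_nonneg (norm_nonneg z) (norm_nonneg w)
    rcases mul_pos_iff.mp hp with ⟨h1, h2⟩ | ⟨h1, h2⟩ <;>
      nlinarith [hXY, he, h1, h2]
  by_cases hab0 : a * b = 0
  · -- degenerate case
    have huv0 : u ^ 2 + v ^ 2 = 0 := by linear_combination hab - hab0
    have h0 : u ^ 2 + v ^ 2 - 1 = -1 := by rw [huv0]; ring
    rw [h0] at h
    simp only [norm_neg, norm_one] at h
    have habs : ‖u‖ = ‖v‖ := by
      have h1 : u ^ 2 = -v ^ 2 := by linear_combination huv0
      have h2 : ‖u‖ ^ 2 = ‖v‖ ^ 2 := by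
        rw [← norm_pow, ← norm_pow, h1, norm_neg]
      nlinarith [norm_nonneg u, norm_nonneg v]
    have hu1 : ‖u‖ < 1 := by nlinarith
    have hv1 : ‖v‖ < 1 := by nlinarith
    refine ⟨a / 2, b / 2, ?_, ?_, ?_, ?_⟩
    · calc ‖a / 2‖ ≤ (‖u‖ + ‖I * v‖) / 2 := by
            rw [norm_div]
            simp only [Complex.norm_ofNat]
            have := norm_add_le u (I * v)
            rw [ha]
            linarith [this]
          _ < 1 := by simp only [norm_mul, Complex.norm_I, one_mul]; linarith
    · calc ‖b / 2‖ ≤ (‖-u‖ + ‖I * v‖) / 2 := by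
            rw [norm_div]
            simp only [Complex.norm_ofNat]
            have := norm_add_le (-u) (I * v)
            rw [hb]
            linarith [this]
          _ < 1 := by
            simp only [norm_mul, Complex.norm_I, one_mul, norm_neg]; linarith
    · have hz : (a / 2) * (b / 2) = 0 := by rw [div_mul_div_comm, hab0]; simp
      rw [hz, sub_zero, div_one, ha, hb]
      ring
    · have hz : (a / 2) * (b / 2) = 0 := by rw [div_mul_div_comm, hab0]; simp
      rw [hz, sub_zero, div_one, ha, hb]
      linear_combination -v * Complex.I_sq
  · -- generic case
    have ha0 : a ≠ 0 := left_ne_zero_of_mul hab0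
    have hb0 : b ≠ 0 := right_ne_zero_of_mul hab0
    obtain ⟨s, hs⟩ : ∃ s : ℂ, s ^ 2 = 1 + a * b :=
      IsAlgClosed.exists_pow_nat_eq (1 + a * b) two_pos
    have hes : ∀ ε : ℂ, ε ^ 2 = 1 → ε * s ≠ 1 := by
      intro ε hε h'
      apply hab0
      have hsq : (ε * s) ^ 2 = 1 := by rw [h']; ring
      linear_combination hsq - s ^ 2 * hε - hs
    obtain ⟨hd1, hu1, hv1⟩ := root_spec u v s 1 a b ha hb hs (by ring) ha0 hb0
      (hes 1 (by ring))
    obtain ⟨hd2, hu2, hv2⟩ := root_spec u v s (-1) a b ha hb hs (by ring) ha0 hb0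
      (hes (-1) (by ring))
    set z₁ : ℂ := (-1 + 1 * s) / b
    set w₁ : ℂ := (-1 + 1 * s) / a
    set z₂ : ℂ := (-1 + (-1) * s) / b
    set w₂ : ℂ := (-1 + (-1) * s) / a
    have hprod : (z₁ * w₁) * (z₂ * w₂) = 1 := by
      simp only [z₁, w₁, z₂, w₂]
      field_simp
      linear_combination (s ^ 2 + a * b - 1) * hs
    have habsprod : (‖z₁‖ * ‖w₁‖) * (‖z₂‖ * ‖w₂‖) = 1 := by
      have := congrArg (‖·‖) hprod
      simp only [norm_mul, norm_one] at this
      linarith [this]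
    have pos1 := pos z₁ w₁ hd1 hu1 hv1
    have pos2 := pos z₂ w₂ hd2 hu2 hv2
    rcases lt_or_ge (‖z₁‖ * ‖w₁‖) 1 with hlt | hge
    · obtain ⟨h1, h2⟩ := both_lt z₁ w₁ pos1 hlt
      exact ⟨z₁, w₁, h1, h2, hu1, hv1⟩
    · have hle : ‖z₂‖ * ‖w₂‖ ≤ 1 := by
        nlinarith [mul_nonneg (norm_nonneg z₂) (norm_nonneg w₂)]
      have hne := ne_one z₂ w₂ pos2
      have hlt2 : ‖z₂‖ * ‖w₂‖ < 1 := lt_of_le_of_ne hle hne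
      obtain ⟨h1, h2⟩ := both_lt z₂ w₂ pos2 hlt2
      exact ⟨z₂, w₂, h1, h2, hu2, hv2⟩

/-- The map `H(z,w) = ((z−w)/(1−zw), −i(z+w)/(1−zw))` is a holomorphic bijection from
`𝔻 × 𝔻` onto `Ω₁`; moreover, with `(u,v) = H(z,w)`, one has
`|u²+v²−1| > |u|²+|v|²−1` iff `(1−|z|²)(1−|w|²) > 0`. -/
theorem stmt18 :
    Set.BijOn
      (fun zw : ℂ × ℂ => ((zw.1 - zw.2) / (1 - zw.1 * zw.2),
        -I * (zw.1 + zw.2) / (1 - zw.1 * zw.2)))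
      {zw : ℂ × ℂ | ‖zw.1‖ < 1 ∧ ‖zw.2‖ < 1} Omega1 ∧
    DifferentiableOn ℂ
      (fun zw : ℂ × ℂ => ((zw.1 - zw.2) / (1 - zw.1 * zw.2),
        -I * (zw.1 + zw.2) / (1 - zw.1 * zw.2)))
      {zw : ℂ × ℂ | ‖zw.1‖ < 1 ∧ ‖zw.2‖ < 1} ∧
    (∀ z w : ℂ, 1 - z * w ≠ 0 →
      (‖((z - w) / (1 - z * w)) ^ 2 + (-I * (z + w) / (1 - z * w)) ^ 2 - 1‖ >
          ‖(z - w) / (1 - z * w)‖ ^ 2 +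
            ‖-I * (z + w) / (1 - z * w)‖ ^ 2 - 1 ↔
        0 < (1 - ‖z‖ ^ 2) * (1 - ‖w‖ ^ 2))) := by
  refine ⟨⟨?_, inj_on, ?_⟩, ?_, fun z w hd => key_iff z w hd⟩
  · -- MapsTo
    rintro ⟨z, w⟩ ⟨hz, hw⟩
    have hd : 1 - z * w ≠ 0 := den_ne z w hz hw
    have hpos : 0 < (1 - ‖z‖ ^ 2) * (1 - ‖w‖ ^ 2) := by
      have h1 : 0 < 1 - ‖z‖ ^ 2 := by
        nlinarith [norm_nonneg z]
      have h2 : 0 < 1 - ‖w‖ ^ 2 := by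
        nlinarith [norm_nonneg w]
      positivity
    exact (key_iff z w hd).mpr hpos
  · -- SurjOn
    rintro ⟨u, v⟩ hmem
    obtain ⟨z, w, hz, hw, hu, hv⟩ := exists_pre u v hmem
    exact ⟨(z, w), ⟨hz, hw⟩, by simp only [Prod.mk.injEq]; exact ⟨hu, hv⟩⟩
  · -- holomorphy
    have hden : ∀ x : ℂ × ℂ, x ∈ {zw : ℂ × ℂ | ‖zw.1‖ < 1 ∧ ‖zw.2‖ < 1} →
        1 - x.1 * x.2 ≠ 0 := fun x hx => den_ne x.1 x.2 hx.1 hx.2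
    apply DifferentiableOn.prodMk
    · intro x hx
      simp only [div_eq_mul_inv]
      exact ((by fun_prop : DifferentiableAt ℂ (fun y : ℂ × ℂ => y.1 - y.2) x).mul
        ((by fun_prop : DifferentiableAt ℂ (fun y : ℂ × ℂ => 1 - y.1 * y.2) x).inv
          (hden x hx))).differentiableWithinAt
    · intro x hx
      simp only [div_eq_mul_inv]
      exact ((by fun_prop : DifferentiableAt ℂ (fun y : ℂ × ℂ => -I * (y.1 + y.2)) x).mul
        ((by fun_prop : DifferentiableAt ℂ (fun y : ℂ × ℂ => 1 - y.1 * y.2) x).inv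
          (hden x hx))).differentiableWithinAt
end

section
/- The map J(z,w) = [z−w : 1−zw : i(1+zw) : −i(z+w)] from 𝔻 × 𝔻 to complex projective 3-space is well-defined, holomorphic and injective, and its image lies in the set 𝒟₁⁽²⁾ defined by: points [s:t:u:v] with s ≠ 0 satisfying (after normalizing s=1) |t|²+|u|²−|v|² > 1, t²+u²−v² = 1 and Im(u(conj(t)+conj(v))) > 0, together with points [0:t:u:v] satisfying t²+u²−v² = 0 and Im(u(conj(t)+conj(v))) > 0. -/
open Complex

lemma absSqLt (z : ℂ) (hz : ‖z‖ < 1) : z.re ^ 2 + z.im ^ 2 < 1 := by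
  have h := Complex.sq_norm z
  rw [Complex.normSq_apply] at h
  nlinarith [norm_nonneg z]

lemma keyIm (z w : ℂ) (hz : ‖z‖ < 1) (hw : ‖w‖ < 1) :
    0 < ((I * (1 + z * w)) * ((starRingEnd ℂ) (1 - z * w) + (starRingEnd ℂ) (-I * (z + w)))).im := by
  have hz' := absSqLt z hz
  have hw' := absSqLt w hw
  have he : ((I * (1 + z * w)) * ((starRingEnd ℂ) (1 - z * w) + (starRingEnd ℂ) (-I * (z + w)))).im
      = 1 - (z.re^2+z.im^2)*(w.re^2+w.im^2) + z.im*(1-(w.re^2+w.im^2)) + w.im*(1-(z.re^2+z.im^2)) := by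
    simp [Complex.mul_im, Complex.mul_re, Complex.add_im, Complex.add_re, Complex.sub_im,
      Complex.sub_re, Complex.one_re, Complex.one_im, Complex.I_re, Complex.I_im,
      Complex.neg_re, Complex.neg_im, Complex.conj_re, Complex.conj_im]
    ring
  rw [he]
  have h1 : 0 < 1 + z.im := by nlinarith [sq_nonneg z.re]
  have h2 : 0 < 1 + w.im := by nlinarith [sq_nonneg w.re]
  have hA : 0 < (1 + z.im)^2 + z.re^2 := by positivity
  have hB : 0 < (1 + w.im)^2 + w.re^2 := by positivity
  nlinarith [mul_pos (by linarith : (0:ℝ) < 1 - (w.re^2+w.im^2)) hA,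
    mul_pos (by linarith : (0:ℝ) < 1 - (z.re^2+z.im^2)) hB]


/-- Homogeneous coordinates of the map `J(z,w) = [z−w : 1−zw : i(1+zw) : −i(z+w)]`. -/
noncomputable def Jvec (z w : ℂ) : Fin 4 → ℂ :=
  ![z - w, 1 - z * w, I * (1 + z * w), -I * (z + w)]

/-- The domain `𝒟₁⁽²⁾ ⊆ ℂP³`, described by a scaling-invariant predicate on
homogeneous coordinate vectors. -/
def D1sq (v : Fin 4 → ℂ) : Prop :=
  (v 0 ≠ 0 ∧
    ‖v 1 / v 0‖ ^ 2 + ‖v 2 / v 0‖ ^ 2 -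
        ‖v 3 / v 0‖ ^ 2 > 1 ∧
    (v 1 / v 0) ^ 2 + (v 2 / v 0) ^ 2 - (v 3 / v 0) ^ 2 = 1 ∧
    0 < ((v 2 / v 0) * ((starRingEnd ℂ) (v 1 / v 0) + (starRingEnd ℂ) (v 3 / v 0))).im) ∨
  (v 0 = 0 ∧ (v 1) ^ 2 + (v 2) ^ 2 - (v 3) ^ 2 = 0 ∧
    0 < (v 2 * ((starRingEnd ℂ) (v 1) + (starRingEnd ℂ) (v 3))).im)

/-- The map `J(z,w) = [z−w : 1−zw : i(1+zw) : −i(z+w)]` from `𝔻 × 𝔻` to `ℂP³` is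
well-defined (the coordinate vector is nonzero), holomorphic (each homogeneous
coordinate is a holomorphic function), injective as a map into projective space, and
its image lies in `𝒟₁⁽²⁾`. -/
theorem stmt19 :
    (∀ z w : ℂ, ‖z‖ < 1 → ‖w‖ < 1 → Jvec z w ≠ 0) ∧
    (∀ i : Fin 4, Differentiable ℂ (fun zw : ℂ × ℂ => Jvec zw.1 zw.2 i)) ∧
    (∀ z w z' w' : ℂ, ‖z‖ < 1 → ‖w‖ < 1 →
      ‖z'‖ < 1 → ‖w'‖ < 1 →
      (∃ c : ℂ, c ≠ 0 ∧ Jvec z' w' = c • Jvec z w) → (z', w') = (z, w)) ∧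
    (∀ z w : ℂ, ‖z‖ < 1 → ‖w‖ < 1 → D1sq (Jvec z w)) := by
  refine ⟨?_, ?_, ?_, ?_⟩
  · -- nonvanishing
    intro z w hz hw h
    have h1 : Jvec z w 1 = 0 := by rw [h]; rfl
    simp only [Jvec, Matrix.cons_val_one, Matrix.head_cons, Matrix.cons_val_zero] at h1
    have h2 : z * w = 1 := by linear_combination -h1
    have h3 : ‖z * w‖ < 1 := by
      rw [norm_mul]
      calc ‖z‖ * ‖w‖ ≤ 1 * ‖w‖ :=
            mul_le_mul_of_nonneg_right hz.le (norm_nonneg w)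
        _ < 1 := by simpa using hw
    rw [h2] at h3; simp at h3
  · -- holomorphy
    intro i
    fin_cases i <;> simp [Jvec] <;> fun_prop
  · -- injectivity
    intro z w z' w' hz hw hz' hw' ⟨c, hc, heq⟩
    have e1 : 1 - z' * w' = c * (1 - z * w) := by
      have := congrFun heq 1; simpa [Jvec] using this
    have e2 : I * (1 + z' * w') = c * (I * (1 + z * w)) := by
      have := congrFun heq 2; simpa [Jvec] using this
    have e2' : 1 + z' * w' = c * (1 + z * w) := by
      apply mul_left_cancel₀ Complex.I_ne_zero
      rw [e2]; ring
    have hc1 : c = 1 := by linear_combination (-e1 - e2') / 2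
    subst hc1
    have e0 : z' - w' = z - w := by
      have := congrFun heq 0; simpa [Jvec] using this
    have e3 : -I * (z' + w') = -I * (z + w) := by
      have := congrFun heq 3; simpa [Jvec] using this
    have e3' : z' + w' = z + w := by
      have hI : (-I : ℂ) ≠ 0 := by simpa using Complex.I_ne_zero
      exact mul_left_cancel₀ hI e3
    have : z' = z := by linear_combination (e0 + e3') / 2
    have : w' = w := by linear_combination (e3' - e0) / 2
    simp_all
  · -- image in D1sq
    intro z w hz hw
    have hz' := absSqLt z hz
    have hw' := absSqLt w hw
    simp only [D1sq, Jvec, Matrix.cons_val_zero, Matrix.cons_val_one, Matrix.head_cons,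
      Matrix.cons_val_two, Matrix.tail_cons, Matrix.cons_val_three, Fin.isValue]
    by_cases hzw : z = w
    · right
      subst hzw
      refine ⟨by ring, ?_, ?_⟩
      · linear_combination ((1 + z * z)^2 - (z + z)^2) * Complex.I_sq
      · simpa using keyIm z z hz hz
    · left
      have hs : z - w ≠ 0 := sub_ne_zero.2 hzw
      have hS : 0 < Complex.normSq (z - w) := Complex.normSq_pos.2 hs
      refine ⟨hs, ?_, ?_, ?_⟩
      · -- abs inequality
        rw [gt_iff_lt, norm_div, norm_div, norm_div, div_pow, div_pow, div_pow,
          ← add_div, ← sub_div, lt_div_iff₀ (pow_pos (norm_pos_iff.2 hs) 2)]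
        rw [Complex.sq_norm, Complex.sq_norm, Complex.sq_norm, Complex.sq_norm]
        have key : Complex.normSq (1 - z*w) + Complex.normSq (I * (1 + z*w))
            - Complex.normSq (-I * (z + w)) - Complex.normSq (z - w)
            = 2 * (1 - (z.re^2+z.im^2)) * (1 - (w.re^2+w.im^2)) := by
          simp [Complex.normSq_apply, Complex.mul_im, Complex.mul_re, Complex.add_im,
            Complex.add_re, Complex.sub_im, Complex.sub_re, Complex.one_re, Complex.one_im,
            Complex.I_re, Complex.I_im, Complex.neg_re, Complex.neg_im]
          ring
        nlinarith [mul_pos (by linarith : (0:ℝ) < 1 - (z.re^2+z.im^2))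
          (by linarith : (0:ℝ) < 1 - (w.re^2+w.im^2))]
      · field_simp
        linear_combination ((1 + z*w)^2 - (z + w)^2) * Complex.I_sq
      · have e : (I * (1 + z*w) / (z - w)) * ((starRingEnd ℂ) ((1 - z*w) / (z - w))
            + (starRingEnd ℂ) ((-I * (z + w)) / (z - w)))
            = ((I * (1 + z*w)) * ((starRingEnd ℂ) (1 - z*w) + (starRingEnd ℂ) (-I * (z + w))))
              / ((Complex.normSq (z - w) : ℝ) : ℂ) := by
          rw [map_div₀, map_div₀, ← add_div, div_mul_div_comm, ← Complex.mul_conj]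
        rw [e]
        have him := keyIm z w hz hw
        rw [Complex.div_ofReal_im]
        exact div_pos him hS
end
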